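/- Let ρ > 0 and ν ∈ ℝ with cos(πν) ≠ 0. Then the function g₀(r) = −(√(r² + ρ²)/(4π cos(πν) r ρ)) · sin((ν + 1/2) · arccos((r² − ρ²)/(r² + ρ²))) satisfies g₀''(r) + (2/r) · g₀'(r) + (4 ν(ν+1) ρ²/(r² + ρ²)²) · g₀(r) = 0 for all r > 0. -/

import Mathlib

/-!
Since `g'' + (2 / r) g' = (r g)'' / r`, writing `g₀ = c w / r` reduces the equation to
`w'' + V w = 0` for `w = √(r² + ρ²) sin φ`. For `r > 0` the phase
`φ = (ν + 1/2) arccos ((r² - ρ²) / (r² + ρ²))` has `φ' = -k / (r² + ρ²)` with `k = (2ν + 1) ρ`,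
and for any phase of this kind the cross terms of `w''` cancel, leaving
`w'' = -((k² - ρ²) / (r² + ρ²)²) w`; finally `k² - ρ² = 4 ν (ν + 1) ρ²`.
-/

open Real Filter Topology

lemma deriv_deriv_div_id_add_two_div_mul_deriv {u u' : ℝ → ℝ} {u'' r : ℝ} (hr : r ≠ 0)
    (hu : ∀ᶠ t in 𝓝 r, HasDerivAt u (u' t) t) (hu' : HasDerivAt u' u'' r) :
    deriv (deriv fun t => u t / t) r + 2 / r * deriv (fun t => u t / t) r = u'' / r := by
  have hderiv : deriv (fun t => u t / t) =ᶠ[𝓝 r] fun t => (u' t * t - u t) / t ^ 2 := by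
    filter_upwards [hu, eventually_ne_nhds hr] with t ht ht0
    simpa using (ht.fun_div (hasDerivAt_id' t) ht0).deriv
  have h2 := ((hu'.fun_mul (hasDerivAt_id' r)).fun_sub hu.self_of_nhds).fun_div
    (hasDerivAt_pow 2 r) (pow_ne_zero 2 hr)
  rw [hderiv.deriv_eq, h2.deriv, hderiv.eq_of_nhds]
  field_simp
  ring

lemma hasDerivAt_sqrt_sq_add {a : ℝ} (ha : 0 < a) (t : ℝ) :
    HasDerivAt (fun u => √(u ^ 2 + a)) (t / √(t ^ 2 + a)) t := by
  convert ((hasDerivAt_pow 2 t).add_const a).sqrt (by positivity) using 1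
  field_simp
  ring

lemma hasDerivAt_arccos_sq_sub_div_sq_add {ρ t : ℝ} (hρ : 0 < ρ) (ht : 0 < t) :
    HasDerivAt (fun u => arccos ((u ^ 2 - ρ ^ 2) / (u ^ 2 + ρ ^ 2)))
      (-(2 * ρ) / (t ^ 2 + ρ ^ 2)) t := by
  have hq : 0 < t ^ 2 + ρ ^ 2 := by positivity
  have hx := ((hasDerivAt_pow 2 t).sub_const (ρ ^ 2)).fun_div
    ((hasDerivAt_pow 2 t).add_const (ρ ^ 2)) hq.ne'
  have hlt : (t ^ 2 - ρ ^ 2) / (t ^ 2 + ρ ^ 2) < 1 := (div_lt_one hq).mpr (by nlinarith)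
  have hgt : -1 < (t ^ 2 - ρ ^ 2) / (t ^ 2 + ρ ^ 2) := (lt_div_iff₀ hq).mpr (by nlinarith)
  have h_one_sub_sq : 1 - ((t ^ 2 - ρ ^ 2) / (t ^ 2 + ρ ^ 2)) ^ 2
      = (2 * t * ρ / (t ^ 2 + ρ ^ 2)) ^ 2 := by
    field_simp
    ring
  refine ((hasDerivAt_arccos hgt.ne' hlt.ne).comp t hx).congr_deriv ?_
  rw [h_one_sub_sq, sqrt_sq (by positivity)]
  field_simp
  ring

section SqrtMulSin

variable {ρ k t : ℝ} {φ : ℝ → ℝ}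

lemma hasDerivAt_sqrt_mul_sin (hρ : ρ ≠ 0) (hφ : HasDerivAt φ (-k / (t ^ 2 + ρ ^ 2)) t) :
    HasDerivAt (fun u => √(u ^ 2 + ρ ^ 2) * sin (φ u))
      (t / √(t ^ 2 + ρ ^ 2) * sin (φ t) - k / √(t ^ 2 + ρ ^ 2) * cos (φ t)) t := by
  refine ((hasDerivAt_sqrt_sq_add (by positivity) t).fun_mul hφ.sin).congr_deriv ?_
  have hS : √(t ^ 2 + ρ ^ 2) ^ 2 = t ^ 2 + ρ ^ 2 := sq_sqrt (by positivity)
  have hS0 : 0 < √(t ^ 2 + ρ ^ 2) := sqrt_pos.mpr (by positivity)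
  generalize √(t ^ 2 + ρ ^ 2) = S at hS hS0 ⊢
  rw [← hS]
  field_simp
  ring

lemma hasDerivAt_deriv_sqrt_mul_sin (hρ : ρ ≠ 0) (hφ : HasDerivAt φ (-k / (t ^ 2 + ρ ^ 2)) t) :
    HasDerivAt (fun u => u / √(u ^ 2 + ρ ^ 2) * sin (φ u) - k / √(u ^ 2 + ρ ^ 2) * cos (φ u))
      (-((k ^ 2 - ρ ^ 2) / (t ^ 2 + ρ ^ 2) ^ 2) * (√(t ^ 2 + ρ ^ 2) * sin (φ t))) t := by
  have hS0 : 0 < √(t ^ 2 + ρ ^ 2) := sqrt_pos.mpr (by positivity)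
  have hsqrt := hasDerivAt_sqrt_sq_add (a := ρ ^ 2) (by positivity) t
  refine ((((hasDerivAt_id' t).fun_div hsqrt hS0.ne').fun_mul hφ.sin).fun_sub
    (((hasDerivAt_const t k).fun_div hsqrt hS0.ne').fun_mul hφ.cos)).congr_deriv ?_
  have hS : √(t ^ 2 + ρ ^ 2) ^ 2 = t ^ 2 + ρ ^ 2 := sq_sqrt (by positivity)
  generalize √(t ^ 2 + ρ ^ 2) = S at hS hS0 ⊢
  rw [← hS]
  field_simp
  linear_combination sin (φ t) * hS

end SqrtMulSin

theorem central_green_solves_radial_equation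
    (ρ ν : ℝ) (hρ : 0 < ρ)
    (g₀ : ℝ → ℝ)
    (hg₀ : g₀ = fun r =>
      -(Real.sqrt (r ^ 2 + ρ ^ 2) / (4 * Real.pi * Real.cos (Real.pi * ν) * r * ρ))
        * Real.sin ((ν + 1 / 2) * Real.arccos ((r ^ 2 - ρ ^ 2) / (r ^ 2 + ρ ^ 2)))) :
    ∀ r : ℝ, 0 < r →
      deriv (deriv g₀) r + (2 / r) * deriv g₀ r
        + (4 * ν * (ν + 1) * ρ ^ 2 / (r ^ 2 + ρ ^ 2) ^ 2) * g₀ r = 0 := by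
  intro r hr
  set c := -1 / (4 * π * cos (π * ν) * ρ)
  set φ : ℝ → ℝ := fun t => (ν + 1 / 2) * arccos ((t ^ 2 - ρ ^ 2) / (t ^ 2 + ρ ^ 2))
  have hφ : ∀ t, 0 < t → HasDerivAt φ (-((2 * ν + 1) * ρ) / (t ^ 2 + ρ ^ 2)) t := fun t ht =>
    ((hasDerivAt_arccos_sq_sub_div_sq_add hρ ht).const_mul (ν + 1 / 2)).congr_deriv (by ring)
  have hg : g₀ = fun t => c * (√(t ^ 2 + ρ ^ 2) * sin (φ t)) / t := by
    rw [hg₀]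
    funext t
    ring
  have hu := fun t (ht : 0 < t) => (hasDerivAt_sqrt_mul_sin hρ.ne' (hφ t ht)).const_mul c
  have hu' := (hasDerivAt_deriv_sqrt_mul_sin hρ.ne' (hφ r hr)).const_mul c
  have hradial :=
    deriv_deriv_div_id_add_two_div_mul_deriv hr.ne' ((eventually_gt_nhds hr).mono hu) hu'
  rw [hg]
  linear_combination hradial
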